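/- Let A ∈ ℝ^{n×n} be symmetric positive definite, B ∈ ℝ^{m₁×n}, C ∈ ℝ^{m₂×n}, D ∈ ℝ^{m₃×m₂}, such that the block matrix K := [[A, Cᵀ, 0],[C, 0, Dᵀ],[0, D, 0]] is invertible. Define M₂ := [B 0 0] K⁻¹ [Bᵀ; 0; 0] and W₂ := {w ∈ ℝ^n : for all μ ∈ ℝ^{m₂}, Dμ = 0 implies μᵀ C w = 0}. Then for all λ ∈ ℝ^{m₁}, √(λᵀ M₂ λ) = sup over nonzero w ∈ W₂ of (Bw, λ)_{ℓ²} / √(wᵀ A w). -/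

import Mathlib

/-!
Let `(x, μ, ν) = K⁻¹ (Bᵀλ, 0, 0)`. The second block row `C x + Dᵀ ν = 0` puts `x` in `W₂`, and
since the third block row puts `μ` in `ker D`, the first one gives `(B w, λ) = xᵀ A w` for every
`w ∈ W₂`. Hence `λᵀ M₂ λ = (B x, λ) = xᵀ A x`, while by Cauchy–Schwarz for the form `A` the
supremum of `xᵀ A w / √(wᵀ A w)` over `W₂ \ {0}` is `√(xᵀ A x)`, attained at `w = x`.
-/

open Matrix

namespace Matrix

variable {ι : Type*} [Fintype ι]

lemma dotProduct_mulVec_comm_of_transpose_eq {R : Type*} [CommSemiring R] {A : Matrix ι ι R}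
    (hA : Aᵀ = A) (a b : ι → R) : a ⬝ᵥ A *ᵥ b = b ⬝ᵥ A *ᵥ a := by
  rw [dotProduct_mulVec, ← mulVec_transpose, hA, dotProduct_comm]

lemma PosSemidef.dotProduct_mulVec_self_nonneg {A : Matrix ι ι ℝ} (hA : A.PosSemidef)
    (x : ι → ℝ) : 0 ≤ x ⬝ᵥ A *ᵥ x := by
  simpa using hA.dotProduct_mulVec_nonneg x

lemma PosSemidef.dotProduct_mulVec_sq_le {A : Matrix ι ι ℝ} (hA : A.PosSemidef) (x w : ι → ℝ) :
    (x ⬝ᵥ A *ᵥ w) ^ 2 ≤ (x ⬝ᵥ A *ᵥ x) * (w ⬝ᵥ A *ᵥ w) := by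
  classical
  have h := LinearMap.BilinForm.apply_mul_apply_le_of_forall_zero_le (toLinearMap₂' ℝ A)
    (fun v => by simpa [toLinearMap₂'_apply'] using hA.dotProduct_mulVec_self_nonneg v) x w
  simp only [toLinearMap₂'_apply'] at h
  rwa [dotProduct_mulVec_comm_of_transpose_eq (A := A) hA.isHermitian w x, ← sq] at h

lemma PosSemidef.dotProduct_mulVec_div_sqrt_le {A : Matrix ι ι ℝ} (hA : A.PosSemidef)
    (x w : ι → ℝ) : x ⬝ᵥ A *ᵥ w / √(w ⬝ᵥ A *ᵥ w) ≤ √(x ⬝ᵥ A *ᵥ x) := by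
  rcases (hA.dotProduct_mulVec_self_nonneg w).eq_or_lt with hw | hw
  · simp [← hw]
  rw [div_le_iff₀ (Real.sqrt_pos.mpr hw), ← Real.sqrt_mul (hA.dotProduct_mulVec_self_nonneg x)]
  exact (le_abs_self _).trans (Real.abs_le_sqrt (hA.dotProduct_mulVec_sq_le x w))

theorem PosSemidef.iSup_dotProduct_mulVec_div_sqrt {A : Matrix ι ι ℝ} (hA : A.PosSemidef)
    (P : (ι → ℝ) → Prop) {x : ι → ℝ} (hx : P x) :
    ⨆ w : {w : ι → ℝ // P w ∧ w ≠ 0}, x ⬝ᵥ A *ᵥ (w : ι → ℝ) / √((w : ι → ℝ) ⬝ᵥ A *ᵥ w) =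
      √(x ⬝ᵥ A *ᵥ x) := by
  rcases eq_or_ne x 0 with rfl | hx0
  · simp
  have : Nonempty {w : ι → ℝ // P w ∧ w ≠ 0} := ⟨⟨x, hx, hx0⟩⟩
  refine le_antisymm (ciSup_le fun w => hA.dotProduct_mulVec_div_sqrt_le x w) ?_
  refine le_ciSup_of_le ⟨√(x ⬝ᵥ A *ᵥ x), ?_⟩ ⟨x, hx, hx0⟩ Real.div_sqrt.ge
  rintro _ ⟨w, rfl⟩
  exact hA.dotProduct_mulVec_div_sqrt_le x w

end Matrix

section SaddlePoint

variable {R ι κ ρ : Type*} [CommRing R] [Fintype ι] [Fintype κ] [Fintype ρ]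

def saddlePointMatrix (A : Matrix ι ι R) (C : Matrix κ ι R) (D : Matrix ρ κ R) :
    Matrix (ι ⊕ κ ⊕ ρ) (ι ⊕ κ ⊕ ρ) R :=
  fromBlocks A (fromCols Cᵀ 0) (fromRows C 0) (fromBlocks 0 Dᵀ D 0)

variable {A : Matrix ι ι R} {C : Matrix κ ι R} {D : Matrix ρ κ R}
  {x : ι → R} {μ : κ → R} {ν : ρ → R} {f : ι → R}

lemma saddlePointMatrix_mulVec_eq_sumElim_zero_iff :
    saddlePointMatrix A C D *ᵥ Sum.elim x (Sum.elim μ ν) = Sum.elim f 0 ↔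
      A *ᵥ x + Cᵀ *ᵥ μ = f ∧ C *ᵥ x + Dᵀ *ᵥ ν = 0 ∧ D *ᵥ μ = 0 := by
  simp only [saddlePointMatrix, fromBlocks_mulVec, Sum.elim_comp_inl, Sum.elim_comp_inr,
    fromCols_mulVec, fromRows_mulVec, zero_mulVec, add_zero, zero_add, ← Sum.elim_add_add,
    ← Sum.elim_zero_zero, Sum.elim_eq_iff]

lemma dotProduct_mulVec_eq_zero_of_saddlePointMatrix_mulVec
    (h : saddlePointMatrix A C D *ᵥ Sum.elim x (Sum.elim μ ν) = Sum.elim f 0)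
    {μ' : κ → R} (hμ' : D *ᵥ μ' = 0) : μ' ⬝ᵥ C *ᵥ x = 0 := by
  obtain ⟨-, hx, -⟩ := saddlePointMatrix_mulVec_eq_sumElim_zero_iff.mp h
  rw [eq_neg_of_add_eq_zero_left hx, dotProduct_neg, dotProduct_mulVec, vecMul_transpose, hμ',
    zero_dotProduct, neg_zero]

lemma dotProduct_eq_of_saddlePointMatrix_mulVec (hA : Aᵀ = A)
    (h : saddlePointMatrix A C D *ᵥ Sum.elim x (Sum.elim μ ν) = Sum.elim f 0)
    {w : ι → R} (hw : ∀ μ' : κ → R, D *ᵥ μ' = 0 → μ' ⬝ᵥ C *ᵥ w = 0) :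
    f ⬝ᵥ w = x ⬝ᵥ A *ᵥ w := by
  obtain ⟨hf, -, hμ⟩ := saddlePointMatrix_mulVec_eq_sumElim_zero_iff.mp h
  rw [← hf, add_dotProduct, mulVec_transpose, ← dotProduct_mulVec, hw μ hμ, add_zero,
    dotProduct_comm, dotProduct_mulVec_comm_of_transpose_eq hA]

end SaddlePoint

lemma dotProduct_fromCols_zero_mul_mulVec {R m ι κ : Type*} [CommRing R] [Fintype m]
    [Fintype ι] [Fintype κ] (B : Matrix m ι R) (M : Matrix (ι ⊕ κ) (ι ⊕ κ) R) (v : m → R)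
    {x : ι → R} {y : κ → R} (h : M *ᵥ Sum.elim (Bᵀ *ᵥ v) 0 = Sum.elim x y) :
    v ⬝ᵥ (fromCols B (0 : Matrix m κ R) * M * (fromCols B (0 : Matrix m κ R))ᵀ) *ᵥ v =
      Bᵀ *ᵥ v ⬝ᵥ x := by
  rw [← mulVec_mulVec, ← mulVec_mulVec, transpose_fromCols, transpose_zero, fromRows_mulVec,
    zero_mulVec, h, dotProduct_mulVec, ← mulVec_transpose, transpose_fromCols, transpose_zero,
    fromRows_mulVec, zero_mulVec, sumElim_dotProduct_sumElim, zero_dotProduct, add_zero]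

theorem stmt2 {n m1 m2 m3 : ℕ} (A : Matrix (Fin n) (Fin n) ℝ)
    (B : Matrix (Fin m1) (Fin n) ℝ) (C : Matrix (Fin m2) (Fin n) ℝ)
    (D : Matrix (Fin m3) (Fin m2) ℝ)
    (hA : A.PosDef)
    (hK : IsUnit (Matrix.fromBlocks A (Matrix.fromCols Cᵀ (0 : Matrix (Fin n) (Fin m3) ℝ))
        (Matrix.fromRows C (0 : Matrix (Fin m3) (Fin n) ℝ))
        (Matrix.fromBlocks (0 : Matrix (Fin m2) (Fin m2) ℝ) Dᵀ D
          (0 : Matrix (Fin m3) (Fin m3) ℝ))).det)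
    (lam : Fin m1 → ℝ) :
    Real.sqrt (lam ⬝ᵥ
        ((Matrix.of fun i => Sum.elim (B i) (0 : Fin m2 ⊕ Fin m3 → ℝ)) *
          (Matrix.fromBlocks A (Matrix.fromCols Cᵀ (0 : Matrix (Fin n) (Fin m3) ℝ))
            (Matrix.fromRows C (0 : Matrix (Fin m3) (Fin n) ℝ))
            (Matrix.fromBlocks (0 : Matrix (Fin m2) (Fin m2) ℝ) Dᵀ D
              (0 : Matrix (Fin m3) (Fin m3) ℝ)))⁻¹ *
          (Matrix.of fun i => Sum.elim (B i) (0 : Fin m2 ⊕ Fin m3 → ℝ))ᵀ) *ᵥ lam) =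
      ⨆ w : {w : Fin n → ℝ //
          (∀ μ : Fin m2 → ℝ, D *ᵥ μ = 0 → μ ⬝ᵥ C *ᵥ w = 0) ∧ w ≠ 0},
        (B *ᵥ (w : Fin n → ℝ) ⬝ᵥ lam) /
          Real.sqrt ((w : Fin n → ℝ) ⬝ᵥ A *ᵥ (w : Fin n → ℝ)) := by
  rw [← saddlePointMatrix] at hK ⊢
  obtain ⟨x, μ, ν, hsol⟩ : ∃ x μ ν, (saddlePointMatrix A C D)⁻¹ *ᵥ Sum.elim (Bᵀ *ᵥ lam) 0 =
      Sum.elim x (Sum.elim μ ν) := ⟨_, _, _, by ext (i | j | k) <;> rfl⟩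
  have hKsol : saddlePointMatrix A C D *ᵥ Sum.elim x (Sum.elim μ ν) =
      Sum.elim (Bᵀ *ᵥ lam) 0 := by
    rw [← hsol, mulVec_mulVec, mul_nonsing_inv _ hK, one_mulVec]
  have hxW (μ' : Fin m2 → ℝ) (hμ' : D *ᵥ μ' = 0) : μ' ⬝ᵥ C *ᵥ x = 0 :=
    dotProduct_mulVec_eq_zero_of_saddlePointMatrix_mulVec hKsol hμ'
  have hBw (w : Fin n → ℝ) (hw : ∀ μ' : Fin m2 → ℝ, D *ᵥ μ' = 0 → μ' ⬝ᵥ C *ᵥ w = 0) :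
      Bᵀ *ᵥ lam ⬝ᵥ w = x ⬝ᵥ A *ᵥ w :=
    dotProduct_eq_of_saddlePointMatrix_mulVec (A := A) hA.isHermitian hKsol hw
  rw [show Matrix.of (fun i => Sum.elim (B i) 0) =
      fromCols B (0 : Matrix (Fin m1) (Fin m2 ⊕ Fin m3) ℝ) from rfl,
    dotProduct_fromCols_zero_mul_mulVec B _ lam hsol, hBw x hxW,
    ← hA.posSemidef.iSup_dotProduct_mulVec_div_sqrt
      (fun w => ∀ μ' : Fin m2 → ℝ, D *ᵥ μ' = 0 → μ' ⬝ᵥ C *ᵥ w = 0) hxW]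
  refine iSup_congr fun w => ?_
  rw [← hBw w w.2.1, mulVec_transpose, ← dotProduct_mulVec, dotProduct_comm]
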